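/- Let |C⟩ = (√ρ ⊗ I)|Ω⟩ and |D⟩ = (√σ ⊗ I)|Ω⟩ for real positive semidefinite density matrices ρ, σ, and let W = sgn(√σ √ρ). Then ⟨D|(I ⊗ W)|C⟩ = F(ρ,σ) = Tr √(ρ^{1/2} σ ρ^{1/2}). -/

import Mathlib

open Matrix Kronecker
open scoped ComplexOrder

noncomputable section
attribute [local instance] Classical.propDecidable

/-- Moore–Penrose pseudoinverse of a square complex matrix. -/
def pinv {n : Type*} [Fintype n] [DecidableEq n] (A : Matrix n n ℂ) : Matrix n n ℂ :=
  if h : ∃ B : Matrix n n ℂ,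
      A * B * A = A ∧ B * A * B = B ∧ (A * B)ᴴ = A * B ∧ (B * A)ᴴ = B * A
  then h.choose else 0

/-- Positive semidefinite square root (junk value `0` if the matrix is not PSD). -/
def msqrt {n : Type*} [Fintype n] [DecidableEq n] (A : Matrix n n ℂ) : Matrix n n ℂ :=
  if h : A.PosSemidef then (h.1.eigenvectorUnitary : Matrix n n ℂ) *
    diagonal ((↑) ∘ Real.sqrt ∘ h.1.eigenvalues) * (star h.1.eigenvectorUnitary : Matrix n n ℂ)
    else 0

/-- `sgn(X) = U sgn(Σ) V*` for an SVD `X = U Σ V*`; equivalently `X (X* X)^{-1/2}`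
with the Moore–Penrose pseudoinverse. -/
def msgn {n : Type*} [Fintype n] [DecidableEq n] (X : Matrix n n ℂ) : Matrix n n ℂ :=
  X * pinv (msqrt (Xᴴ * X))

/-- Matrix geometric mean `A # B = A^{1/2} (A^{-1/2} B A^{-1/2})^{1/2} A^{1/2}`
(with Moore–Penrose pseudoinverses). -/
def geo {n : Type*} [Fintype n] [DecidableEq n] (A B : Matrix n n ℂ) : Matrix n n ℂ :=
  msqrt A * msqrt (pinv (msqrt A) * B * pinv (msqrt A)) * msqrt A

/-- The unnormalized maximally entangled state `|Ω⟩ = ∑ i, |i⟩ ⊗ |i⟩`. -/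
def omegaVec (d : ℕ) : Fin d × Fin d → ℂ := fun p => if p.1 = p.2 then 1 else 0

/-- Reduced density matrix of `|C⟩⟨C|` on the first subsystem
(partial trace over the second subsystem). -/
def reducedA {d : ℕ} (C : Fin d × Fin d → ℂ) : Matrix (Fin d) (Fin d) ℂ :=
  Matrix.of fun i j => ∑ k, C (i, k) * star (C (j, k))

/-- Partial trace over the first subsystem of the operator `|D⟩⟨C|`. -/
def trA {d : ℕ} (D C : Fin d × Fin d → ℂ) : Matrix (Fin d) (Fin d) ℂ :=
  Matrix.of fun j l => ∑ i, D (i, j) * star (C (i, l))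

/-- `ℓ²→ℓ²` operator norm (largest singular value). -/
def opNorm {n : Type*} [Fintype n] [DecidableEq n] (A : Matrix n n ℂ) : ℝ :=
  ‖(Matrix.toEuclideanCLM (𝕜 := ℂ) A : EuclideanSpace ℂ n →L[ℂ] EuclideanSpace ℂ n)‖

/-- `P` is the orthogonal projection onto the image (column space) of `A`. -/
def IsOrthProjOnto {n : Type*} [Fintype n] [DecidableEq n] (P A : Matrix n n ℂ) : Prop :=
  Pᴴ = P ∧ P * P = P ∧ LinearMap.range P.mulVecLin = LinearMap.range A.mulVecLin

/-- `η` is the smallest nonzero eigenvalue of the Hermitian matrix `M`. -/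
def IsSmallestNonzeroEigenvalue {n : Type*} [Fintype n] [DecidableEq n]
    (M : Matrix n n ℂ) (η : ℝ) : Prop :=
  ∃ hM : M.IsHermitian, η ≠ 0 ∧ (∃ i, hM.eigenvalues i = η) ∧
    ∀ i, hM.eigenvalues i ≠ 0 → η ≤ hM.eigenvalues i


/-! With `A = √ρ`, `B = √σ` we have `(M ⊗ 1)|Ω⟩ = vec Mᵀ` and `(1 ⊗ W) vec Y = vec (W Y)`, and
`A`, `B` are real symmetric, so the amplitude is `Tr (B W A) = Tr (X* sgn X)` for `X = B A`.
As `sgn X = X |X|⁺` with `|X| = √(X* X)`, this is `Tr (|X|² |X|⁺) = Tr |X|`, and `X* X = A σ A`. -/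

open scoped MatrixOrder

namespace Matrix

theorem IsHermitian.transpose_eq_self_of_map_star {m α : Type*} [Star α] {A : Matrix m m α}
    (hA : A.IsHermitian) (hreal : A.map star = A) : Aᵀ = A :=
  calc Aᵀ = (A.map star)ᵀ := by rw [hreal]
    _ = A := hA

variable {n : Type*} [Fintype n] [DecidableEq n]

theorem IsHermitian.exists_penrose {A : Matrix n n ℂ} (hA : A.IsHermitian) :
    ∃ B : Matrix n n ℂ,
      A * B * A = A ∧ B * A * B = B ∧ (A * B)ᴴ = A * B ∧ (B * A)ᴴ = B * A := by
  have hcont (f : ℝ → ℝ) : ContinuousOn f (spectrum ℝ A) := (Set.toFinite _).continuousOn f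
  have hmul (f g : ℝ → ℝ) : cfc f A * cfc g A = cfc (fun x => f x * g x) A :=
    (cfc_mul f g A (hcont f) (hcont g)).symm
  have hsa (f : ℝ → ℝ) : (cfc f A)ᴴ = cfc f A := cfc_predicate f A
  have hinv (x : ℝ) : x⁻¹ * x * x⁻¹ = x⁻¹ := by simpa only [inv_inv] using mul_inv_mul_cancel x⁻¹
  -- the reciprocal on the spectrum, with `0⁻¹ = 0`, is a generalized inverse of the identity
  rw [← cfc_id' ℝ A]
  refine ⟨cfc (fun x : ℝ => x⁻¹) A, ?_, ?_, ?_, ?_⟩ <;> simp only [hmul, hsa, mul_inv_mul_cancel, hinv]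

theorem IsHermitian.mul_pinv_mul {A : Matrix n n ℂ} (hA : A.IsHermitian) :
    A * pinv A * A = A := by
  have h := hA.exists_penrose
  rw [pinv, dif_pos h]
  exact h.choose_spec.1

theorem PosSemidef.msqrt_eq_sqrt {A : Matrix n n ℂ} (hA : A.PosSemidef) :
    msqrt A = CFC.sqrt A := by
  rw [msqrt, dif_pos hA, CFC.sqrt_eq_cfc, cfc_nnreal_eq_real _ A, hA.1.cfc_eq, IsHermitian.cfc,
    Unitary.conjStarAlgAut_apply]
  congr 3
  funext x
  simp only [Function.comp_apply]
  rw [Real.sqrt.eq_1]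
  rfl

theorem posSemidef_msqrt (A : Matrix n n ℂ) : (msqrt A).PosSemidef := by
  by_cases hA : A.PosSemidef
  · rw [hA.msqrt_eq_sqrt]
    exact (CFC.sqrt_nonneg A).posSemidef
  · rw [msqrt, dif_neg hA]
    exact PosSemidef.zero

theorem PosSemidef.msqrt_mul_msqrt {A : Matrix n n ℂ} (hA : A.PosSemidef) :
    msqrt A * msqrt A = A := by
  rw [hA.msqrt_eq_sqrt]
  exact CFC.sqrt_mul_sqrt_self A hA.nonneg

theorem PosSemidef.transpose_msqrt {A : Matrix n n ℂ} (hA : A.PosSemidef) :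
    (msqrt A)ᵀ = msqrt Aᵀ := by
  rw [hA.transpose.msqrt_eq_sqrt]
  refine (CFC.sqrt_unique ?_ (posSemidef_msqrt A).transpose.nonneg).symm
  rw [← transpose_mul, hA.msqrt_mul_msqrt]

theorem trace_conjTranspose_mul_msgn (X : Matrix n n ℂ) :
    (Xᴴ * msgn X).trace = (msqrt (Xᴴ * X)).trace := by
  set S := msqrt (Xᴴ * X)
  have hS : S * S = Xᴴ * X := (posSemidef_conjTranspose_mul_self X).msqrt_mul_msqrt
  calc (Xᴴ * msgn X).trace = (S * S * pinv S).trace := by rw [msgn, ← Matrix.mul_assoc, hS]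
    _ = (S * pinv S * S).trace := by rw [Matrix.mul_assoc, trace_mul_comm, Matrix.mul_assoc]
    _ = S.trace := by rw [(posSemidef_msqrt _).1.mul_pinv_mul]

end Matrix

open Matrix

theorem omegaVec_eq_vec_one (d : ℕ) : omegaVec d = vec (1 : Matrix (Fin d) (Fin d) ℂ) := by
  ext ⟨i, j⟩
  simp [omegaVec, vec, one_apply, eq_comm]

theorem kronecker_one_mulVec_omegaVec {d : ℕ} (M : Matrix (Fin d) (Fin d) ℂ) :
    (M ⊗ₖ (1 : Matrix (Fin d) (Fin d) ℂ)) *ᵥ omegaVec d = vec Mᵀ := by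
  rw [omegaVec_eq_vec_one, kronecker_mulVec_vec, Matrix.one_mul, Matrix.one_mul]

theorem canonical_uhlmann_achieves_fidelity_general (d : ℕ)
    (ρ σ : Matrix (Fin d) (Fin d) ℂ)
    (hρ : ρ.PosSemidef) (hσ : σ.PosSemidef)
    (hρreal : ρ.map star = ρ) (hσreal : σ.map star = σ) :
    star ((msqrt σ ⊗ₖ (1 : Matrix (Fin d) (Fin d) ℂ)).mulVec (omegaVec d)) ⬝ᵥ
        (((1 : Matrix (Fin d) (Fin d) ℂ) ⊗ₖ msgn (msqrt σ * msqrt ρ)).mulVec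
          ((msqrt ρ ⊗ₖ (1 : Matrix (Fin d) (Fin d) ℂ)).mulVec (omegaVec d)))
      = (msqrt (msqrt ρ * σ * msqrt ρ)).trace := by
  set A := msqrt ρ
  set B := msqrt σ
  have hAH : Aᴴ = A := (posSemidef_msqrt ρ).1
  have hBH : Bᴴ = B := (posSemidef_msqrt σ).1
  have hAT : Aᵀ = A := by rw [hρ.transpose_msqrt, hρ.1.transpose_eq_self_of_map_star hρreal]
  have hBT : Bᵀ = B := by rw [hσ.transpose_msqrt, hσ.1.transpose_eq_self_of_map_star hσreal]
  have hXX : (B * A)ᴴ * (B * A) = A * σ * A := by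
    rw [conjTranspose_mul, hAH, hBH, Matrix.mul_assoc, ← Matrix.mul_assoc B, hσ.msqrt_mul_msqrt,
      Matrix.mul_assoc]
  calc _ = (B * (msgn (B * A) * A)).trace := by
        rw [kronecker_one_mulVec_omegaVec, kronecker_one_mulVec_omegaVec, kronecker_mulVec_vec,
          star_vec_dotProduct_vec, hAT, hBT, hBH, transpose_one, Matrix.mul_one]
    _ = ((B * A)ᴴ * msgn (B * A)).trace := by
        rw [conjTranspose_mul, hAH, hBH, ← Matrix.mul_assoc, trace_mul_comm, Matrix.mul_assoc]
    _ = _ := by rw [trace_conjTranspose_mul_msgn, hXX]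

theorem canonical_uhlmann_achieves_fidelity (d : ℕ)
    (ρ σ : Matrix (Fin d) (Fin d) ℂ)
    (hρ : ρ.PosSemidef) (hσ : σ.PosSemidef)
    (hρreal : ρ.map star = ρ) (hσreal : σ.map star = σ)
    (hρtr : ρ.trace = 1) (hσtr : σ.trace = 1) :
    star ((msqrt σ ⊗ₖ (1 : Matrix (Fin d) (Fin d) ℂ)).mulVec (omegaVec d)) ⬝ᵥ
        (((1 : Matrix (Fin d) (Fin d) ℂ) ⊗ₖ msgn (msqrt σ * msqrt ρ)).mulVec
          ((msqrt ρ ⊗ₖ (1 : Matrix (Fin d) (Fin d) ℂ)).mulVec (omegaVec d)))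
      = (msqrt (msqrt ρ * σ * msqrt ρ)).trace :=
  canonical_uhlmann_achieves_fidelity_general d ρ σ hρ hσ hρreal hσreal
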